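/- arXiv:2106.14239 — 6 statements merged into one kernel-verified Lean document; each statement's English description precedes it below -/
import Mathlib

section
/- Let B ∈ ℝ^{3×3} be symmetric positive definite with minimal and maximal eigenvalues λ_min and λ_max, and let τ ∈ (−π/2, π/2). Then for all x ∈ ℂ³ with |x| = 1, the real part of x* B_τ x satisfies λ_min − (1−cos τ)·λ_max ≤ Re(x* B_τ x) ≤ λ_max − (1−cos τ)·λ_min. -/
open Matrix Complex

lemma quad_bounds_aux (B : Matrix (Fin 3) (Fin 3) ℝ) (hB : B.IsHermitian)
    (lmin lmax : ℝ)
    (hmin : IsLeast {μ : ℝ | ∃ v : Fin 3 → ℝ, v ≠ 0 ∧ B.mulVec v = μ • v} lmin)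
    (hmax : IsGreatest {μ : ℝ | ∃ v : Fin 3 → ℝ, v ≠ 0 ∧ B.mulVec v = μ • v} lmax)
    (v : EuclideanSpace ℝ (Fin 3)) :
    lmin * (∑ i, v i ^ 2) ≤ v ⬝ᵥ B.mulVec v ∧
      v ⬝ᵥ B.mulVec v ≤ lmax * (∑ i, v i ^ 2) := by
  classical
  set e := hB.eigenvectorBasis with he
  set lam := hB.eigenvalues with hlam
  have hsymm : ∀ i j, B i j = B j i := by
    intro i j
    have := congrFun (congrFun hB j) i
    simpa [Matrix.conjTranspose_apply] using this
  have hmem : ∀ i, lam i ∈ {μ : ℝ | ∃ v : Fin 3 → ℝ, v ≠ 0 ∧ B.mulVec v = μ • v} := by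
    intro i
    refine ⟨e i, ?_, hB.mulVec_eigenvectorBasis i⟩
    have h0 := e.orthonormal.ne_zero i
    intro h
    exact h0 (by ext j; exact congrFun h j)
  have hinner : ∀ a b : EuclideanSpace ℝ (Fin 3), (inner ℝ a b) = ∑ i, a i * b i := by
    intro a b; simp [PiLp.inner_apply, mul_comm]
  have heig : ∀ i k, (∑ j, B k j * (e i) j) = lam i * (e i) k := by
    intro i k
    have := congrFun (hB.mulVec_eigenvectorBasis i) k
    simpa [Matrix.mulVec, dotProduct] using this
  set w : EuclideanSpace ℝ (Fin 3) := WithLp.toLp 2 (fun j => ∑ k, B j k * v k) with hw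
  have hwv : v ⬝ᵥ B.mulVec v = (inner ℝ v w) := by
    rw [hinner]
    simp [dotProduct, Matrix.mulVec, hw]
  have h1 : (inner ℝ v w) = ∑ i, (inner ℝ v (e i)) * (inner ℝ (e i) w) :=
    (e.sum_inner_mul_inner v w).symm
  have h2 : ∀ i, (inner ℝ (e i) w) = lam i * (inner ℝ (e i) v) := by
    intro i
    rw [hinner, hinner]
    have : ∑ j, (e i) j * w j = ∑ k, (∑ j, B k j * (e i) j) * v k := by
      simp only [hw, PiLp.toLp_apply, Finset.mul_sum, Finset.sum_mul]
      rw [Finset.sum_comm]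
      exact Finset.sum_congr rfl fun k _ => Finset.sum_congr rfl fun j _ => by
        rw [hsymm j k]; ring
    rw [this, Finset.mul_sum]
    exact Finset.sum_congr rfl fun k _ => by rw [heig i k]; ring
  have key : v ⬝ᵥ B.mulVec v = ∑ i, lam i * (inner ℝ (e i) v)^2 := by
    rw [hwv, h1]
    refine Finset.sum_congr rfl fun i _ => ?_
    rw [h2 i, real_inner_comm v (e i)]; ring
  have hnorm : (∑ i, v i ^ 2) = ∑ i, (inner ℝ (e i) v)^2 := by
    have h1' : (inner ℝ v v) = ∑ i, (inner ℝ v (e i)) * (inner ℝ (e i) v) :=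
      (e.sum_inner_mul_inner v v).symm
    have h2' : (inner ℝ v v) = ∑ i, v i ^ 2 := by
      rw [hinner]; exact Finset.sum_congr rfl fun i _ => (sq (v i)).symm
    rw [← h2', h1']
    exact Finset.sum_congr rfl fun i _ => by rw [real_inner_comm v (e i)]; ring
  rw [key, hnorm, Finset.mul_sum, Finset.mul_sum]
  exact ⟨Finset.sum_le_sum fun i _ =>
      mul_le_mul_of_nonneg_right (hmin.2 (hmem i)) (sq_nonneg _),
    Finset.sum_le_sum fun i _ =>
      mul_le_mul_of_nonneg_right (hmax.2 (hmem i)) (sq_nonneg _)⟩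

lemma quadC_bounds_aux (B : Matrix (Fin 3) (Fin 3) ℝ) (hB : B.IsHermitian)
    (lmin lmax : ℝ)
    (hmin : IsLeast {μ : ℝ | ∃ v : Fin 3 → ℝ, v ≠ 0 ∧ B.mulVec v = μ • v} lmin)
    (hmax : IsGreatest {μ : ℝ | ∃ v : Fin 3 → ℝ, v ≠ 0 ∧ B.mulVec v = μ • v} lmax)
    (z : Fin 3 → ℂ) :
    lmin * (∑ i, ‖z i‖ ^ 2) ≤ (star z ⬝ᵥ (B.map (Complex.ofReal)).mulVec z).re ∧
      (star z ⬝ᵥ (B.map (Complex.ofReal)).mulVec z).re ≤ lmax * (∑ i, ‖z i‖ ^ 2) := by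
  have hsymm : ∀ i j, B i j = B j i := by
    intro i j
    have := congrFun (congrFun hB j) i
    simpa [Matrix.conjTranspose_apply] using this
  set a : EuclideanSpace ℝ (Fin 3) := WithLp.toLp 2 (fun i => (z i).re) with ha
  set b : EuclideanSpace ℝ (Fin 3) := WithLp.toLp 2 (fun i => (z i).im) with hb
  have hre : (star z ⬝ᵥ (B.map (Complex.ofReal)).mulVec z).re
      = a ⬝ᵥ B.mulVec a + b ⬝ᵥ B.mulVec b := by
    simp only [dotProduct, Matrix.mulVec, Matrix.map_apply, Fin.sum_univ_three,
      Pi.star_apply, RCLike.star_def, ha, hb]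
    simp [Complex.add_re, Complex.mul_re, Complex.add_im, Complex.mul_im]
    rw [hsymm 1 0, hsymm 2 0, hsymm 2 1]
    ring
  have habs : (∑ i, ‖z i‖ ^ 2) = (∑ i, a i ^ 2) + (∑ i, b i ^ 2) := by
    rw [← Finset.sum_add_distrib]
    refine Finset.sum_congr rfl fun i _ => ?_
    rw [Complex.sq_norm, Complex.normSq_apply]
    simp only [ha, hb, PiLp.toLp_apply]
    ring
  have Ha := quad_bounds_aux B hB lmin lmax hmin hmax a
  have Hb := quad_bounds_aux B hB lmin lmax hmin hmax b
  rw [hre, habs]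
  constructor <;> nlinarith [Ha.1, Ha.2, Hb.1, Hb.2]

/-- The complex-scaled matrix `B_τ` from Lemma 3.2 (Lemma `NumRan`) of the paper. -/
noncomputable def Btau (B : Matrix (Fin 3) (Fin 3) ℝ) (τ : ℝ) : Matrix (Fin 3) (Fin 3) ℂ :=
  !![Complex.exp (τ * Complex.I) * (B 0 0 : ℂ), (B 0 1 : ℂ), (B 0 2 : ℂ);
     (B 1 0 : ℂ), Complex.exp (-τ * Complex.I) * (B 1 1 : ℂ),
       Complex.exp (-τ * Complex.I) * (B 1 2 : ℂ);
     (B 2 0 : ℂ), Complex.exp (-τ * Complex.I) * (B 2 1 : ℂ),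
       Complex.exp (-τ * Complex.I) * (B 2 2 : ℂ)]

set_option maxHeartbeats 2000000 in
lemma key_id_aux (B : Matrix (Fin 3) (Fin 3) ℝ) (hsym : B 2 1 = B 1 2) (τ : ℝ) (x : Fin 3 → ℂ) :
    (star x ⬝ᵥ (Btau B τ).mulVec x).re
      = (star x ⬝ᵥ (B.map (Complex.ofReal)).mulVec x).re
        - (1 - Real.cos τ) *
          ((star ![x 0, 0, 0] ⬝ᵥ (B.map (Complex.ofReal)).mulVec ![x 0, 0, 0]).re
            + (star ![(0:ℂ), x 1, x 2] ⬝ᵥ (B.map (Complex.ofReal)).mulVec ![(0:ℂ), x 1, x 2]).re) := by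
  have he1 : Complex.exp (↑τ * Complex.I) = Real.cos τ + Real.sin τ * Complex.I := by
    rw [Complex.exp_mul_I]; simp [Complex.ofReal_cos, Complex.ofReal_sin]
  have he2 : Complex.exp (-↑τ * Complex.I) = Real.cos τ - Real.sin τ * Complex.I := by
    rw [show (-(τ:ℂ) * Complex.I) = (↑(-τ) : ℂ) * Complex.I by push_cast; ring,
      Complex.exp_mul_I]
    simp [Complex.ofReal_cos, Complex.ofReal_sin, Complex.cos_neg, Complex.sin_neg]
    ring
  have h3 : (Complex.cos ↑τ).re = Real.cos τ := by
    exact Complex.cos_ofReal_re τ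
  have h4 : (Complex.exp (-(↑τ * Complex.I))).re = Real.cos τ := by
    rw [← neg_mul, he2]; simp [Complex.cos_ofReal_re]
  simp [Btau, Matrix.mulVec, dotProduct, Fin.sum_univ_three, he1, he2, hsym, h3, h4]
  ring

theorem real_part_numerical_range
    (B : Matrix (Fin 3) (Fin 3) ℝ) (hB : B.PosDef)
    (τ : ℝ) (hτ : τ ∈ Set.Ioo (-(Real.pi / 2)) (Real.pi / 2))
    (lmin lmax : ℝ)
    (hmin : IsLeast {μ : ℝ | ∃ v : Fin 3 → ℝ, v ≠ 0 ∧ B.mulVec v = μ • v} lmin)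
    (hmax : IsGreatest {μ : ℝ | ∃ v : Fin 3 → ℝ, v ≠ 0 ∧ B.mulVec v = μ • v} lmax)
    (x : Fin 3 → ℂ) (hx : ∑ i, ‖x i‖ ^ 2 = 1) :
    lmin - (1 - Real.cos τ) * lmax ≤ (star x ⬝ᵥ (Btau B τ).mulVec x).re ∧
      (star x ⬝ᵥ (Btau B τ).mulVec x).re ≤ lmax - (1 - Real.cos τ) * lmin := by
  have hH := hB.1
  have hsym : B 2 1 = B 1 2 := by
    have := congrFun (congrFun hH 1) 2
    simpa [Matrix.conjTranspose_apply] using this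
  have key := key_id_aux B hsym τ x
  obtain ⟨Hx1, Hx2⟩ := quadC_bounds_aux B hH lmin lmax hmin hmax x
  rw [hx, mul_one] at Hx1 Hx2
  obtain ⟨Hu1, Hu2⟩ := quadC_bounds_aux B hH lmin lmax hmin hmax ![x 0, 0, 0]
  obtain ⟨Hv1, Hv2⟩ := quadC_bounds_aux B hH lmin lmax hmin hmax ![(0:ℂ), x 1, x 2]
  have hu : (∑ i, ‖![x 0, 0, 0] i‖ ^ 2) = ‖x 0‖ ^ 2 := by
    simp [Fin.sum_univ_three]
  have hv : (∑ i, ‖![(0:ℂ), x 1, x 2] i‖ ^ 2)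
      = ‖x 1‖ ^ 2 + ‖x 2‖ ^ 2 := by
    simp [Fin.sum_univ_three]
  rw [hu] at Hu1 Hu2
  rw [hv] at Hv1 Hv2
  have hst : ‖x 0‖ ^ 2 + ‖x 1‖ ^ 2 + ‖x 2‖ ^ 2 = 1 := by
    rw [← hx, Fin.sum_univ_three]
  have hc : 0 ≤ 1 - Real.cos τ := by linarith [Real.cos_le_one τ]
  set Qu := (star ![x 0, 0, 0] ⬝ᵥ (B.map (Complex.ofReal)).mulVec ![x 0, 0, 0]).re
  set Qv := (star ![(0:ℂ), x 1, x 2] ⬝ᵥ (B.map (Complex.ofReal)).mulVec ![(0:ℂ), x 1, x 2]).re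
  have hone : ‖x 0‖ ^ 2 + (‖x 1‖ ^ 2 + ‖x 2‖ ^ 2) = 1 := by
    linarith
  have hQmax : Qu + Qv ≤ lmax := by
    have h := congrArg (lmax * ·) hone
    simp only [mul_add, mul_one] at h
    linarith
  have hQmin : lmin ≤ Qu + Qv := by
    have h := congrArg (lmin * ·) hone
    simp only [mul_add, mul_one] at h
    linarith
  rw [key]
  constructor
  · have := mul_le_mul_of_nonneg_left hQmax hc
    linarith
  · have := mul_le_mul_of_nonneg_left hQmin hc
    linarith
end

section
/- Let B ∈ ℝ^{3×3} be symmetric positive definite with maximal eigenvalue λ_max, and let τ ∈ (−π/2, π/2). Then for all x ∈ ℂ³ with |x| = 1, the imaginary part of x* B_τ x satisfies |Im(x* B_τ x)| ≤ λ_max·|sin τ|. -/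
open Matrix Complex

/-- Real inner product on `Fin 3 → ℝ` seen as Euclidean space. -/
noncomputable def ipAux (a b : Fin 3 → ℝ) : ℝ :=
  @inner ℝ (EuclideanSpace ℝ (Fin 3)) _ (WithLp.toLp 2 a) (WithLp.toLp 2 b)

lemma ipAux_eq (a b : Fin 3 → ℝ) : ipAux a b = a ⬝ᵥ b := by
  simp [ipAux, PiLp.inner_apply, dotProduct, mul_comm]

lemma ipAux_comm (a b : Fin 3 → ℝ) : ipAux a b = ipAux b a := real_inner_comm _ _

/-- Rayleigh quotient bound via the largest eigenvalue. -/
lemma rayleigh_aux (B : Matrix (Fin 3) (Fin 3) ℝ) (hH : B.IsHermitian) (lmax : ℝ)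
    (hub : ∀ μ ∈ {μ : ℝ | ∃ v : Fin 3 → ℝ, v ≠ 0 ∧ B.mulVec v = μ • v}, μ ≤ lmax)
    (v : Fin 3 → ℝ) : v ⬝ᵥ B.mulVec v ≤ lmax * (v ⬝ᵥ v) := by
  have hT : Bᵀ = B := by rw [← Matrix.conjTranspose_eq_transpose_of_trivial]; exact hH
  have hsym : ∀ (a b : Fin 3 → ℝ), a ⬝ᵥ B.mulVec b = B.mulVec a ⬝ᵥ b := by
    intro a b
    rw [Matrix.dotProduct_mulVec, ← Matrix.mulVec_transpose, hT]
  set u := hH.eigenvectorBasis with hu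
  have hev : ∀ i, hH.eigenvalues i ≤ lmax := by
    intro i
    exact hub _ ⟨u i, by simpa using u.orthonormal.ne_zero i, hH.mulVec_eigenvectorBasis i⟩
  have key : ∀ i : Fin 3, ipAux (u i) (B.mulVec v) = hH.eigenvalues i * ipAux (u i) v := by
    intro i
    rw [ipAux_eq, ipAux_eq, hsym]
    have h3 : B.mulVec (u i : Fin 3 → ℝ) = hH.eigenvalues i • (u i : Fin 3 → ℝ) :=
      hH.mulVec_eigenvectorBasis i
    rw [h3, smul_dotProduct]
    rfl
  have hexp : ∀ (w : Fin 3 → ℝ), v ⬝ᵥ w = ∑ i, ipAux v (u i) * ipAux (u i) w := by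
    intro w
    rw [← ipAux_eq]
    exact (u.sum_inner_mul_inner (WithLp.toLp 2 v) (WithLp.toLp 2 w)).symm
  have h1 : v ⬝ᵥ B.mulVec v = ∑ i, hH.eigenvalues i * (ipAux (u i) v)^2 := by
    rw [hexp]
    refine Finset.sum_congr rfl fun i _ => ?_
    rw [key i, ipAux_comm v (u i)]; ring
  have h2 : v ⬝ᵥ v = ∑ i, (ipAux (u i) v)^2 := by
    rw [hexp]
    refine Finset.sum_congr rfl fun i _ => ?_
    rw [ipAux_comm v (u i)]; ring
  rw [h1, h2, Finset.mul_sum]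
  exact Finset.sum_le_sum fun i _ => by nlinarith [sq_nonneg (ipAux (u i) v), hev i]

set_option maxHeartbeats 1000000 in
/-- The imaginary part of the sesquilinear form for `Btau`, computed explicitly. -/
lemma im_form_aux (B : Matrix (Fin 3) (Fin 3) ℝ) (τ : ℝ) (x : Fin 3 → ℂ)
    (h10 : B 1 0 = B 0 1) (h20 : B 2 0 = B 0 2) (h21 : B 2 1 = B 1 2) :
    (star x ⬝ᵥ (Btau B τ).mulVec x).im = Real.sin τ *
      (B 0 0 * ((x 0).re^2 + (x 0).im^2)
        - (B 1 1 * ((x 1).re^2 + (x 1).im^2) + B 2 2 * ((x 2).re^2 + (x 2).im^2)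
          + 2 * B 1 2 * ((x 1).re * (x 2).re + (x 1).im * (x 2).im))) := by
  have hneg : (-(τ:ℂ) * I) = ((-τ : ℝ) : ℂ) * I := by push_cast; ring
  have e00 : Btau B τ 0 0 = Complex.exp (τ * Complex.I) * (B 0 0 : ℂ) := by simp [Btau]
  have e01 : Btau B τ 0 1 = (B 0 1 : ℂ) := by simp [Btau]
  have e02 : Btau B τ 0 2 = (B 0 2 : ℂ) := by simp [Btau]
  have e10 : Btau B τ 1 0 = (B 0 1 : ℂ) := by simp [Btau, h10]
  have e11 : Btau B τ 1 1 = Complex.exp (-τ * Complex.I) * (B 1 1 : ℂ) := by simp [Btau]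
  have e12 : Btau B τ 1 2 = Complex.exp (-τ * Complex.I) * (B 1 2 : ℂ) := by simp [Btau]
  have e20 : Btau B τ 2 0 = (B 0 2 : ℂ) := by simp [Btau, h20]
  have e21 : Btau B τ 2 1 = Complex.exp (-τ * Complex.I) * (B 1 2 : ℂ) := by simp [Btau, h21]
  have e22 : Btau B τ 2 2 = Complex.exp (-τ * Complex.I) * (B 2 2 : ℂ) := by simp [Btau]
  simp only [mulVec, dotProduct, Fin.sum_univ_three, Pi.star_apply,
    e00, e01, e02, e10, e11, e12, e20, e21, e22, hneg]
  simp only [Complex.add_im, Complex.add_re, Complex.mul_im, Complex.mul_re,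
    Complex.exp_ofReal_mul_I_re, Complex.exp_ofReal_mul_I_im, Real.cos_neg, Real.sin_neg,
    Complex.ofReal_re, Complex.ofReal_im, RCLike.star_def, Complex.conj_re, Complex.conj_im]
  ring

set_option maxHeartbeats 1000000 in
theorem imag_part_numerical_range
    (B : Matrix (Fin 3) (Fin 3) ℝ) (hB : B.PosDef)
    (τ : ℝ) (hτ : τ ∈ Set.Ioo (-(Real.pi / 2)) (Real.pi / 2))
    (lmax : ℝ)
    (hmax : IsGreatest {μ : ℝ | ∃ v : Fin 3 → ℝ, v ≠ 0 ∧ B.mulVec v = μ • v} lmax)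
    (x : Fin 3 → ℂ) (hx : ∑ i, ‖x i‖ ^ 2 = 1) :
    |(star x ⬝ᵥ (Btau B τ).mulVec x).im| ≤ lmax * |Real.sin τ| := by
  have hH := hB.1
  have hsymm : ∀ i j, B i j = B j i := by
    intro i j
    have := congrFun (congrFun hH j) i
    simpa [Matrix.conjTranspose_apply] using this
  have him := im_form_aux B τ x (hsymm 1 0) (hsymm 2 0) (hsymm 2 1)
  -- basic quadratic form facts
  have Qpos : ∀ v : Fin 3 → ℝ, 0 ≤ v ⬝ᵥ B.mulVec v := by
    intro v
    by_cases h : v = 0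
    · simp [h]
    · have := hB.dotProduct_mulVec_pos h
      simpa using this.le
  have Qle : ∀ v : Fin 3 → ℝ, v ⬝ᵥ B.mulVec v ≤ lmax * (v ⬝ᵥ v) :=
    rayleigh_aux B hH lmax hmax.2
  -- lmax is positive
  obtain ⟨v, hv0, hveq⟩ := hmax.1
  have hvpos : 0 < v ⬝ᵥ B.mulVec v := by simpa using hB.dotProduct_mulVec_pos hv0
  have hvv : 0 ≤ v ⬝ᵥ v := Finset.sum_nonneg fun i _ => mul_self_nonneg _
  have hveval : v ⬝ᵥ B.mulVec v = lmax * (v ⬝ᵥ v) := by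
    rw [hveq, dotProduct_smul]; rfl
  have hl : 0 < lmax := by
    rw [hveval] at hvpos
    nlinarith
  -- quadratic form evaluations on special vectors
  have w1Q : (![(x 0).re, 0, 0] : Fin 3 → ℝ) ⬝ᵥ B.mulVec ![(x 0).re, 0, 0]
      = B 0 0 * (x 0).re ^ 2 := by
    simp [mulVec, dotProduct, Fin.sum_univ_three]; ring
  have w1n : (![(x 0).re, 0, 0] : Fin 3 → ℝ) ⬝ᵥ ![(x 0).re, 0, 0] = (x 0).re ^ 2 := by
    simp [dotProduct, Fin.sum_univ_three]; ring
  have w2Q : (![(x 0).im, 0, 0] : Fin 3 → ℝ) ⬝ᵥ B.mulVec ![(x 0).im, 0, 0]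
      = B 0 0 * (x 0).im ^ 2 := by
    simp [mulVec, dotProduct, Fin.sum_univ_three]; ring
  have w2n : (![(x 0).im, 0, 0] : Fin 3 → ℝ) ⬝ᵥ ![(x 0).im, 0, 0] = (x 0).im ^ 2 := by
    simp [dotProduct, Fin.sum_univ_three]; ring
  have w3Q : (![0, (x 1).re, (x 2).re] : Fin 3 → ℝ) ⬝ᵥ B.mulVec ![0, (x 1).re, (x 2).re]
      = B 1 1 * (x 1).re ^ 2 + B 2 2 * (x 2).re ^ 2 + 2 * B 1 2 * ((x 1).re * (x 2).re) := by
    simp [mulVec, dotProduct, Fin.sum_univ_three, hsymm 2 1]; ring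
  have w3n : (![0, (x 1).re, (x 2).re] : Fin 3 → ℝ) ⬝ᵥ ![0, (x 1).re, (x 2).re]
      = (x 1).re ^ 2 + (x 2).re ^ 2 := by
    simp [dotProduct, Fin.sum_univ_three]; ring
  have w4Q : (![0, (x 1).im, (x 2).im] : Fin 3 → ℝ) ⬝ᵥ B.mulVec ![0, (x 1).im, (x 2).im]
      = B 1 1 * (x 1).im ^ 2 + B 2 2 * (x 2).im ^ 2 + 2 * B 1 2 * ((x 1).im * (x 2).im) := by
    simp [mulVec, dotProduct, Fin.sum_univ_three, hsymm 2 1]; ring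
  have w4n : (![0, (x 1).im, (x 2).im] : Fin 3 → ℝ) ⬝ᵥ ![0, (x 1).im, (x 2).im]
      = (x 1).im ^ 2 + (x 2).im ^ 2 := by
    simp [dotProduct, Fin.sum_univ_three]; ring
  have h1le := Qle ![(x 0).re, 0, 0]
  rw [w1Q, w1n] at h1le
  have h1pos := Qpos ![(x 0).re, 0, 0]
  rw [w1Q] at h1pos
  have h2le := Qle ![(x 0).im, 0, 0]
  rw [w2Q, w2n] at h2le
  have h2pos := Qpos ![(x 0).im, 0, 0]
  rw [w2Q] at h2pos
  have h3le := Qle ![0, (x 1).re, (x 2).re]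
  rw [w3Q, w3n] at h3le
  have h3pos := Qpos ![0, (x 1).re, (x 2).re]
  rw [w3Q] at h3pos
  have h4le := Qle ![0, (x 1).im, (x 2).im]
  rw [w4Q, w4n] at h4le
  have h4pos := Qpos ![0, (x 1).im, (x 2).im]
  rw [w4Q] at h4pos
  -- the norm-1 condition
  rw [Fin.sum_univ_three] at hx
  simp only [Complex.sq_norm, Complex.normSq_apply] at hx
  have hxsum : (x 0).re ^ 2 + (x 0).im ^ 2 + (x 1).re ^ 2 + (x 1).im ^ 2
      + (x 2).re ^ 2 + (x 2).im ^ 2 = 1 := by linear_combination hx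
  -- conclude
  rw [him, abs_mul, mul_comm lmax]
  refine mul_le_mul_of_nonneg_left ?_ (abs_nonneg _)
  rw [abs_le]
  constructor <;> nlinarith [hl, h1le, h1pos, h2le, h2pos, h3le, h3pos, h4le, h4pos, hxsum]
end

section
/- Let B ∈ ℝ^{3×3} be symmetric positive definite with minimal and maximal eigenvalues λ_min and λ_max, and let τ ∈ (−π/2, π/2) satisfy cos τ > 1 − λ_min/λ_max. Then for every x ∈ ℂ³ with |x| = 1 the value z := x* B_τ x is nonzero, has positive real part, and its argument satisfies |arg z| ≤ arctan( λ_max·|sin τ| / (λ_min − (1−cos τ)·λ_max) ). -/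
open Matrix Complex


lemma rayleigh_bounds (B : Matrix (Fin 3) (Fin 3) ℝ) (hH : B.IsHermitian)
    (lmin lmax : ℝ)
    (hmin : ∀ μ ∈ {μ : ℝ | ∃ v : Fin 3 → ℝ, v ≠ 0 ∧ B.mulVec v = μ • v}, lmin ≤ μ)
    (hmax : ∀ μ ∈ {μ : ℝ | ∃ v : Fin 3 → ℝ, v ≠ 0 ∧ B.mulVec v = μ • v}, μ ≤ lmax)
    (v : Fin 3 → ℝ) :
    lmin * (v ⬝ᵥ v) ≤ v ⬝ᵥ B.mulVec v ∧ v ⬝ᵥ B.mulVec v ≤ lmax * (v ⬝ᵥ v) := by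
  classical
  set b := hH.eigenvectorBasis with hb
  set lam := hH.eigenvalues with hlam
  have hev : ∀ i, lmin ≤ lam i ∧ lam i ≤ lmax := by
    intro i
    have hne : (⇑(b i) : Fin 3 → ℝ) ≠ 0 := by
      have := b.orthonormal.ne_zero i
      intro h
      apply this
      ext j
      exact congrFun h j
    have hmem : lam i ∈ {μ : ℝ | ∃ v : Fin 3 → ℝ, v ≠ 0 ∧ B.mulVec v = μ • v} :=
      ⟨⇑(b i), hne, hH.mulVec_eigenvectorBasis i⟩
    exact ⟨hmin _ hmem, hmax _ hmem⟩
  have hT : Bᵀ = B := by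
    ext i j
    have h := congrFun (congrFun hH i) j
    simpa [Matrix.conjTranspose_apply] using h
  set w : EuclideanSpace ℝ (Fin 3) := WithLp.toLp 2 v with hw
  have hinner : ∀ (p q : EuclideanSpace ℝ (Fin 3)), (inner ℝ p q : ℝ) = (p : Fin 3 → ℝ) ⬝ᵥ (q : Fin 3 → ℝ) := by
    intro p q
    simp [PiLp.inner_apply, dotProduct, mul_comm]
  have hrepr : ∀ (p : EuclideanSpace ℝ (Fin 3)) i, b.repr p i = (⇑(b i) : Fin 3 → ℝ) ⬝ᵥ p := by
    intro p i
    rw [b.repr_apply_apply, hinner]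
  set u : EuclideanSpace ℝ (Fin 3) := WithLp.toLp 2 (B.mulVec v) with hu
  have hrepru : ∀ i, b.repr u i = lam i * b.repr w i := by
    intro i
    rw [hrepr, hrepr]
    have h1 : (⇑(b i) : Fin 3 → ℝ) ⬝ᵥ (u : Fin 3 → ℝ) = (B.mulVec (⇑(b i))) ⬝ᵥ v := by
      rw [dotProduct_mulVec, ← Matrix.mulVec_transpose, hT]
    rw [h1, hH.mulVec_eigenvectorBasis i, smul_dotProduct]
    rfl
  have key1 : v ⬝ᵥ v = ∑ i, (b.repr w i)^2 := by
    have := b.repr.inner_map_map w w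
    rw [hinner, hinner] at this
    rw [← this]
    simp [dotProduct, sq]
  have key2 : v ⬝ᵥ B.mulVec v = ∑ i, lam i * (b.repr w i)^2 := by
    have := b.repr.inner_map_map w u
    rw [hinner, hinner] at this
    rw [show (v ⬝ᵥ B.mulVec v) = (w : Fin 3 → ℝ) ⬝ᵥ (u : Fin 3 → ℝ) from rfl, ← this]
    simp only [dotProduct]
    apply Finset.sum_congr rfl
    intro i _
    have : (b.repr w i) * (b.repr u i) = (b.repr w i) * (lam i * b.repr w i) := by rw [hrepru]
    simpa [sq, mul_comm, mul_assoc, mul_left_comm] using this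
  constructor
  · rw [key1, key2, Finset.mul_sum]
    apply Finset.sum_le_sum
    intro i _
    have := (hev i).1
    nlinarith [sq_nonneg (b.repr w i)]
  · rw [key1, key2, Finset.mul_sum]
    apply Finset.sum_le_sum
    intro i _
    have := (hev i).2
    nlinarith [sq_nonneg (b.repr w i)]

set_option maxHeartbeats 1000000 in
theorem numerical_range_sector
    (B : Matrix (Fin 3) (Fin 3) ℝ) (hB : B.PosDef)
    (τ : ℝ) (hτ : τ ∈ Set.Ioo (-(Real.pi / 2)) (Real.pi / 2))
    (lmin lmax : ℝ)
    (hmin : IsLeast {μ : ℝ | ∃ v : Fin 3 → ℝ, v ≠ 0 ∧ B.mulVec v = μ • v} lmin)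
    (hmax : IsGreatest {μ : ℝ | ∃ v : Fin 3 → ℝ, v ≠ 0 ∧ B.mulVec v = μ • v} lmax)
    (hcos : Real.cos τ > 1 - lmin / lmax)
    (x : Fin 3 → ℂ) (hx : ∑ i, ‖x i‖ ^ 2 = 1) :
    star x ⬝ᵥ (Btau B τ).mulVec x ≠ 0 ∧
    0 < (star x ⬝ᵥ (Btau B τ).mulVec x).re ∧
    |Complex.arg (star x ⬝ᵥ (Btau B τ).mulVec x)| ≤
      Real.arctan (lmax * |Real.sin τ| / (lmin - (1 - Real.cos τ) * lmax)) := by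
  have hH : B.IsHermitian := hB.1
  have hsym : ∀ i j : Fin 3, B i j = B j i := by
    intro i j
    have h := congrFun (congrFun hH i) j
    simpa [Matrix.conjTranspose_apply] using h.symm
  have hray := rayleigh_bounds B hH lmin lmax hmin.2 hmax.2
  -- lmin > 0
  have hlminpos : 0 < lmin := by
    obtain ⟨v0, hv0ne, hv0⟩ := hmin.1
    have hp := hB.dotProduct_mulVec_pos hv0ne
    have hdp : star v0 ⬝ᵥ B *ᵥ v0 = lmin * (v0 ⬝ᵥ v0) := by
      rw [hv0, dotProduct_smul, smul_eq_mul]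
      simp [dotProduct]
    rw [hdp] at hp
    have hdn : 0 ≤ v0 ⬝ᵥ v0 := Finset.sum_nonneg fun i _ => mul_self_nonneg _
    nlinarith
  have hlmax : lmin ≤ lmax := hmax.2 hmin.1
  have hlmaxpos : 0 < lmax := lt_of_lt_of_le hlminpos hlmax
  set a := x 0 with ha
  set bb := x 1 with hbb
  set c := x 2 with hc
  set q1 : ℝ := B 0 0 * Complex.normSq a with hq1
  set q2 : ℝ := B 1 1 * Complex.normSq bb + B 2 2 * Complex.normSq c
      + 2 * B 1 2 * ((starRingEnd ℂ) bb * c).re with hq2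
  set s : ℝ := 2 * B 0 1 * ((starRingEnd ℂ) a * bb).re
      + 2 * B 0 2 * ((starRingEnd ℂ) a * c).re with hs
  set z := star x ⬝ᵥ (Btau B τ).mulVec x with hzdef
  have hns : ∀ p : ℂ, ((Complex.normSq p : ℝ) : ℂ) = (starRingEnd ℂ) p * p := by
    intro p
    rw [← Complex.mul_conj]
    ring
  have hre2 : ∀ p q : ℂ, ((((starRingEnd ℂ) p * q).re : ℝ) : ℂ)
      = ((starRingEnd ℂ) p * q + (starRingEnd ℂ) q * p) / 2 := by
    intro p q
    have h := Complex.add_conj ((starRingEnd ℂ) p * q)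
    rw [map_mul ((starRingEnd ℂ)), Complex.conj_conj] at h
    push_cast at h
    linear_combination -(h / 2)
  have hz : z = Complex.exp (τ*I) * (q1 : ℝ) + (s : ℝ) + Complex.exp (-τ*I) * (q2 : ℝ) := by
    rw [hzdef, hq1, hq2, hs]
    simp only [Btau, Matrix.mulVec, dotProduct, Fin.sum_univ_three,
      Matrix.cons_val', Matrix.cons_val_zero, Matrix.cons_val_one, Matrix.head_cons,
      Matrix.empty_val', Matrix.cons_val_fin_one, Matrix.head_fin_const,
      Matrix.of_apply, Pi.star_apply, RCLike.star_def, Matrix.cons_val_two, Matrix.tail_cons]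
    push_cast
    rw [hns, hns, hns, hre2, hre2, hre2]
    rw [show ((B 1 0 : ℝ) : ℂ) = ((B 0 1 : ℝ) : ℂ) by rw [hsym 1 0],
        show ((B 2 0 : ℝ) : ℂ) = ((B 0 2 : ℝ) : ℂ) by rw [hsym 2 0],
        show ((B 2 1 : ℝ) : ℂ) = ((B 1 2 : ℝ) : ℂ) by rw [hsym 2 1]]
    ring
  have hE : (Complex.exp (τ*I)).re = Real.cos τ ∧ (Complex.exp (τ*I)).im = Real.sin τ :=
    ⟨Complex.exp_ofReal_mul_I_re τ, Complex.exp_ofReal_mul_I_im τ⟩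
  have hFe : (-(τ:ℂ) * I) = ((-τ : ℝ) : ℂ) * I := by push_cast; ring
  have hF : (Complex.exp (-(τ:ℂ)*I)).re = Real.cos τ ∧ (Complex.exp (-(τ:ℂ)*I)).im = -Real.sin τ := by
    rw [hFe]
    constructor
    · rw [Complex.exp_ofReal_mul_I_re, Real.cos_neg]
    · rw [Complex.exp_ofReal_mul_I_im, Real.sin_neg]
  have hzre : z.re = Real.cos τ * (q1 + q2) + s := by
    rw [hz]
    simp only [Complex.add_re, Complex.mul_re, Complex.ofReal_re, Complex.ofReal_im,
      hE.1, hE.2, hF.1, hF.2, mul_zero, sub_zero]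
    ring
  have hzim : z.im = Real.sin τ * (q1 - q2) := by
    rw [hz]
    simp only [Complex.add_im, Complex.mul_im, Complex.ofReal_re, Complex.ofReal_im,
      hE.1, hE.2, hF.1, hF.2, mul_zero, add_zero, zero_add]
    ring
  -- real vectors
  have hnorm1 : Complex.normSq a + Complex.normSq bb + Complex.normSq c = 1 := by
    rw [Fin.sum_univ_three] at hx
    simpa [Complex.sq_norm] using hx
  have hq1facts : 0 ≤ q1 ∧ q1 ≤ lmax * Complex.normSq a := by
    set u : Fin 3 → ℝ := ![a.re, 0, 0] with hu
    set v : Fin 3 → ℝ := ![a.im, 0, 0] with hv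
    have e1 : q1 = u ⬝ᵥ B *ᵥ u + v ⬝ᵥ B *ᵥ v := by
      rw [hq1]
      simp [hu, hv, dotProduct, Matrix.mulVec, Fin.sum_univ_three, Complex.normSq_apply]
      ring
    have e2 : u ⬝ᵥ u = a.re ^ 2 := by simp [hu, dotProduct, Fin.sum_univ_three]; ring
    have e3 : v ⬝ᵥ v = a.im ^ 2 := by simp [hv, dotProduct, Fin.sum_univ_three]; ring
    have h1 := hray u
    have h2 := hray v
    have h3 : 0 ≤ lmin * (u ⬝ᵥ u) := mul_nonneg hlminpos.le (by rw [e2]; positivity)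
    have h4 : 0 ≤ lmin * (v ⬝ᵥ v) := mul_nonneg hlminpos.le (by rw [e3]; positivity)
    have hnsa : Complex.normSq a = a.re ^ 2 + a.im ^ 2 := by simp [Complex.normSq_apply]; ring
    have h5 : lmax * (u ⬝ᵥ u) + lmax * (v ⬝ᵥ v) = lmax * Complex.normSq a := by
      rw [e2, e3, hnsa]; ring
    constructor
    · linarith [h1.1, h2.1]
    · linarith [h1.2, h2.2]
  have hq2facts : 0 ≤ q2 ∧ q2 ≤ lmax * (Complex.normSq bb + Complex.normSq c) := by
    set u : Fin 3 → ℝ := ![0, bb.re, c.re] with hu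
    set v : Fin 3 → ℝ := ![0, bb.im, c.im] with hv
    have e1 : q2 = u ⬝ᵥ B *ᵥ u + v ⬝ᵥ B *ᵥ v := by
      rw [hq2]
      simp [hu, hv, dotProduct, Matrix.mulVec, Fin.sum_univ_three, Complex.normSq_apply,
        Complex.mul_re]
      rw [hsym 2 1]
      ring
    have e2 : u ⬝ᵥ u = bb.re ^ 2 + c.re ^ 2 := by
      simp [hu, dotProduct, Fin.sum_univ_three]; ring
    have e3 : v ⬝ᵥ v = bb.im ^ 2 + c.im ^ 2 := by
      simp [hv, dotProduct, Fin.sum_univ_three]; ring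
    have h1 := hray u
    have h2 := hray v
    have h3 : 0 ≤ lmin * (u ⬝ᵥ u) := mul_nonneg hlminpos.le (by rw [e2]; positivity)
    have h4 : 0 ≤ lmin * (v ⬝ᵥ v) := mul_nonneg hlminpos.le (by rw [e3]; positivity)
    have hnsb : Complex.normSq bb = bb.re ^ 2 + bb.im ^ 2 := by simp [Complex.normSq_apply]; ring
    have hnsc : Complex.normSq c = c.re ^ 2 + c.im ^ 2 := by simp [Complex.normSq_apply]; ring
    have h5 : lmax * (u ⬝ᵥ u) + lmax * (v ⬝ᵥ v)
        = lmax * (Complex.normSq bb + Complex.normSq c) := by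
      rw [e2, e3, hnsb, hnsc]; ring
    constructor
    · linarith [h1.1, h2.1]
    · linarith [h1.2, h2.2]
  have hsumge : lmin ≤ q1 + s + q2 := by
    set u : Fin 3 → ℝ := ![a.re, bb.re, c.re] with hu
    set v : Fin 3 → ℝ := ![a.im, bb.im, c.im] with hv
    have e1 : q1 + s + q2 = u ⬝ᵥ B *ᵥ u + v ⬝ᵥ B *ᵥ v := by
      rw [hq1, hq2, hs]
      simp [hu, hv, dotProduct, Matrix.mulVec, Fin.sum_univ_three, Complex.normSq_apply,
        Complex.mul_re]
      rw [hsym 1 0, hsym 2 0, hsym 2 1]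
      ring
    have e2 : u ⬝ᵥ u + v ⬝ᵥ v = 1 := by
      rw [← hnorm1]
      simp [hu, hv, dotProduct, Fin.sum_univ_three, Complex.normSq_apply]
      ring
    have h1 := (hray u).1
    have h2 := (hray v).1
    have h3 : lmin * (u ⬝ᵥ u) + lmin * (v ⬝ᵥ v) = lmin := by
      rw [← mul_add, e2, mul_one]
    linarith
  have hq12le : q1 + q2 ≤ lmax := by
    have h5 : lmax * Complex.normSq a + lmax * (Complex.normSq bb + Complex.normSq c)
        = lmax := by rw [← mul_add]; rw [show Complex.normSq a + (Complex.normSq bb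
          + Complex.normSq c) = 1 by linarith [hnorm1], mul_one]
    linarith [hq1facts.2, hq2facts.2]
  have hD : 0 < lmin - (1 - Real.cos τ) * lmax := by
    have h1 := mul_lt_mul_of_pos_right hcos hlmaxpos
    have h2 : (1 - lmin / lmax) * lmax = lmax - lmin := by field_simp
    nlinarith
  have hrege : lmin - (1 - Real.cos τ) * lmax ≤ z.re := by
    have h1c : 0 ≤ 1 - Real.cos τ := by linarith [Real.cos_le_one τ]
    have h3 : (1 - Real.cos τ) * (q1 + q2) ≤ (1 - Real.cos τ) * lmax :=
      mul_le_mul_of_nonneg_left hq12le h1c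
    rw [hzre]
    nlinarith
  have hrepos : 0 < z.re := lt_of_lt_of_le hD hrege
  have hzne : z ≠ 0 := by
    intro h
    rw [h] at hrepos
    simp at hrepos
  have himle : |z.im| ≤ lmax * |Real.sin τ| := by
    rw [hzim, abs_mul]
    have hd : |q1 - q2| ≤ lmax := abs_le.mpr ⟨by linarith [hq1facts.1, hq2facts.1],
      by linarith [hq1facts.1, hq2facts.1]⟩
    rw [mul_comm lmax]
    exact mul_le_mul_of_nonneg_left hd (abs_nonneg _)
  have habsarg : |Complex.arg z| < Real.pi / 2 :=
    Complex.abs_arg_lt_pi_div_two_iff.mpr (Or.inl hrepos)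
  have harg : Complex.arg z = Real.arctan (z.im / z.re) := by
    obtain ⟨h1, h2⟩ := abs_lt.mp habsarg
    rw [← Complex.tan_arg]
    exact (Real.arctan_tan h1 h2).symm
  refine ⟨hzne, hrepos, ?_⟩
  rw [harg]
  have habs_arctan : ∀ t : ℝ, |Real.arctan t| = Real.arctan |t| := by
    intro t
    rcases le_or_gt 0 t with h | h
    · rw [_root_.abs_of_nonneg h, _root_.abs_of_nonneg]
      have := Real.arctan_strictMono.monotone h
      simpa [Real.arctan_zero] using this
    · rw [_root_.abs_of_neg h, _root_.abs_of_neg, ← Real.arctan_neg]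
      have := Real.arctan_strictMono h
      simpa [Real.arctan_zero] using this
  rw [habs_arctan]
  apply Real.arctan_strictMono.monotone
  rw [abs_div, _root_.abs_of_pos hrepos]
  exact div_le_div₀ (mul_nonneg hlmaxpos.le (abs_nonneg _)) himle hD hrege
end

section
/- Let ς ∈ ℝ^{3×3} be symmetric positive definite with minimal and maximal eigenvalues ς_min and ς_max, let r₀ > 0 and r₁ > (ς_max/ς_min)·r₀, let x̂, ŷ ∈ ℝ³ be unit vectors, let r_y ∈ (0, r₀], and let t ∈ ℂ with Re(t) ≥ r₁ and Im(t) > 0. Then the imaginary part of the complex bilinear quadratic form (t·x̂ − r_y·ŷ)ᵀ ς⁻¹ (t·x̂ − r_y·ŷ) satisfies Im( (t·x̂ − r_y·ŷ)ᵀ ς⁻¹ (t·x̂ − r_y·ŷ) ) ≥ Im(t)·( ς_max⁻¹·(r₁ − r₀) + ς_max⁻¹·r₁ − ς_min⁻¹·r₀ ), and this lower bound is strictly positive. -/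
open Matrix Complex

lemma quad_bounds (A : Matrix (Fin 3) (Fin 3) ℝ) (hA : A.IsHermitian) (a b : ℝ)
    (hb : ∀ i, a ≤ hA.eigenvalues i ∧ hA.eigenvalues i ≤ b) (v : Fin 3 → ℝ) :
    a * (v ⬝ᵥ v) ≤ v ⬝ᵥ A *ᵥ v ∧ v ⬝ᵥ A *ᵥ v ≤ b * (v ⬝ᵥ v) := by
  set U := (hA.eigenvectorUnitary : Matrix (Fin 3) (Fin 3) ℝ) with hUdef
  have hUs' : U * star U = 1 := (Matrix.mem_unitaryGroup_iff).mp hA.eigenvectorUnitary.2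
  set w := star U *ᵥ v with hw
  have hstar : star U = Uᵀ := by
    ext i j; simp [Matrix.star_eq_conjTranspose, Matrix.conjTranspose_apply]
  have key : v ⬝ᵥ A *ᵥ v = ∑ i, hA.eigenvalues i * (w i)^2 := by
    conv_lhs => rw [hA.spectral_theorem, Unitary.conjStarAlgAut_apply]
    rw [← Matrix.mulVec_mulVec, ← Matrix.mulVec_mulVec, Matrix.dotProduct_mulVec]
    have : v ᵥ* U = w := by rw [hw, hstar, Matrix.mulVec_transpose]
    rw [this]
    simp [dotProduct, Matrix.mulVec_diagonal, hw]
    ring_nf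
    congr 1
    ext i
    ring
  have norm_eq : v ⬝ᵥ v = ∑ i, (w i)^2 := by
    have : w ⬝ᵥ w = v ⬝ᵥ v := by
      rw [hw, Matrix.dotProduct_mulVec, Matrix.vecMul_mulVec, hstar, Matrix.transpose_transpose,
        ← hstar, hUs', Matrix.vecMul_one]
    rw [← this]
    simp [dotProduct, sq]
  constructor
  · rw [key, norm_eq, Finset.mul_sum]
    exact Finset.sum_le_sum fun i _ => mul_le_mul_of_nonneg_right (hb i).1 (sq_nonneg _)
  · rw [key, norm_eq, Finset.mul_sum]
    exact Finset.sum_le_sum fun i _ => mul_le_mul_of_nonneg_right (hb i).2 (sq_nonneg _)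

theorem dxy_estimate
    (ς : Matrix (Fin 3) (Fin 3) ℝ) (hς : ς.PosDef)
    (ςmin ςmax : ℝ)
    (hmin : IsLeast {μ : ℝ | ∃ v : Fin 3 → ℝ, v ≠ 0 ∧ ς.mulVec v = μ • v} ςmin)
    (hmax : IsGreatest {μ : ℝ | ∃ v : Fin 3 → ℝ, v ≠ 0 ∧ ς.mulVec v = μ • v} ςmax)
    (r₀ r₁ : ℝ) (hr₀ : 0 < r₀) (hr₁ : r₁ > (ςmax / ςmin) * r₀)
    (xhat yhat : Fin 3 → ℝ)
    (hxhat : ∑ i, xhat i ^ 2 = 1) (hyhat : ∑ i, yhat i ^ 2 = 1)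
    (ry : ℝ) (hry : ry ∈ Set.Ioc 0 r₀)
    (t : ℂ) (htre : r₁ ≤ t.re) (htim : 0 < t.im) :
    t.im * (ςmax⁻¹ * (r₁ - r₀) + ςmax⁻¹ * r₁ - ςmin⁻¹ * r₀) ≤
      ((fun j => t * (xhat j : ℂ) - (ry : ℂ) * (yhat j : ℂ)) ⬝ᵥ
        ((ς⁻¹).map (fun a => (a : ℂ))).mulVec
          (fun j => t * (xhat j : ℂ) - (ry : ℂ) * (yhat j : ℂ))).im ∧
    0 < t.im * (ςmax⁻¹ * (r₁ - r₀) + ςmax⁻¹ * r₁ - ςmin⁻¹ * r₀) := by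
  -- basic positivity facts
  have hdet : IsUnit ς.det := isUnit_iff_ne_zero.mpr (ne_of_gt hς.det_pos)
  have hinv : (ς⁻¹).PosDef := hς.inv
  have hB : (ς⁻¹).IsHermitian := hinv.1
  -- ςmin > 0
  have hςmin_pos : 0 < ςmin := by
    obtain ⟨u, hu0, hu⟩ := hmin.1
    have h1 : 0 < u ⬝ᵥ ς *ᵥ u := by
      have := hς.dotProduct_mulVec_pos hu0
      simpa using this
    have h2 : 0 < u ⬝ᵥ u := by
      have : u ⬝ᵥ u ≠ 0 := fun h => hu0 (dotProduct_self_eq_zero.mp h)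
      have h3 : 0 ≤ u ⬝ᵥ u := Finset.sum_nonneg fun i _ => mul_self_nonneg (u i)
      exact lt_of_le_of_ne h3 (Ne.symm this)
    have : u ⬝ᵥ ς *ᵥ u = ςmin * (u ⬝ᵥ u) := by rw [hu, dotProduct_smul]; rfl
    nlinarith
  have hςmax_ge : ςmin ≤ ςmax := hmin.2 hmax.1
  have hςmax_pos : 0 < ςmax := lt_of_lt_of_le hςmin_pos hςmax_ge
  -- eigenvalues of ς⁻¹ lie in [ςmax⁻¹, ςmin⁻¹]
  have heig : ∀ i, ςmax⁻¹ ≤ hB.eigenvalues i ∧ hB.eigenvalues i ≤ ςmin⁻¹ := by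
    intro i
    set μ := hB.eigenvalues i with hμ
    set u : Fin 3 → ℝ := ⇑(hB.eigenvectorBasis i) with hudef
    have hu0 : u ≠ 0 := by
      intro h
      apply hB.eigenvectorBasis.orthonormal.ne_zero i
      ext j
      exact congrFun h j
    have hu : ς⁻¹ *ᵥ u = μ • u := hB.mulVec_eigenvectorBasis i
    have hback : u = μ • (ς *ᵥ u) := by
      have := congrArg (fun z => ς *ᵥ z) hu
      simpa [Matrix.mulVec_mulVec, Matrix.mul_nonsing_inv ς hdet, Matrix.mulVec_smul] using this
    have hμ0 : μ ≠ 0 := by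
      intro h
      rw [h, zero_smul] at hback
      exact hu0 hback
    have hςu : ς *ᵥ u = μ⁻¹ • u := by
      have h := congrArg (fun z => μ⁻¹ • z) hback
      simp only [smul_smul, inv_mul_cancel₀ hμ0, one_smul] at h
      exact h.symm
    have hmem : μ⁻¹ ∈ {μ : ℝ | ∃ v : Fin 3 → ℝ, v ≠ 0 ∧ ς.mulVec v = μ • v} := ⟨u, hu0, hςu⟩
    have h1 : ςmin ≤ μ⁻¹ := hmin.2 hmem
    have h2 : μ⁻¹ ≤ ςmax := hmax.2 hmem
    have hμpos : 0 < μ := by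
      have : 0 < μ⁻¹ := lt_of_lt_of_le hςmin_pos h1
      exact inv_pos.mp this
    have hμinvpos : 0 < μ⁻¹ := inv_pos.mpr hμpos
    constructor
    · rw [← inv_inv μ]; exact inv_anti₀ hμinvpos h2
    · calc μ = (μ⁻¹)⁻¹ := (inv_inv μ).symm
        _ ≤ ςmin⁻¹ := inv_anti₀ hςmin_pos h1
  -- quadratic form bounds
  have hxx : xhat ⬝ᵥ xhat = 1 := by
    simpa [dotProduct, sq] using hxhat
  have hyy : yhat ⬝ᵥ yhat = 1 := by
    simpa [dotProduct, sq] using hyhat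
  obtain ⟨hxB1, hxB2⟩ := quad_bounds ς⁻¹ hB ςmax⁻¹ ςmin⁻¹ heig xhat
  obtain ⟨hyB1, hyB2⟩ := quad_bounds ς⁻¹ hB ςmax⁻¹ ςmin⁻¹ heig yhat
  rw [hxx, mul_one] at hxB1 hxB2
  rw [hyy, mul_one] at hyB1 hyB2
  -- cross term bound
  have hcross : xhat ⬝ᵥ ς⁻¹ *ᵥ yhat + yhat ⬝ᵥ ς⁻¹ *ᵥ xhat ≤
      xhat ⬝ᵥ ς⁻¹ *ᵥ xhat + yhat ⬝ᵥ ς⁻¹ *ᵥ yhat := by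
    have h0 : 0 ≤ (xhat - yhat) ⬝ᵥ ς⁻¹ *ᵥ (xhat - yhat) := by
      have := hinv.posSemidef.dotProduct_mulVec_nonneg (xhat - yhat)
      simpa using this
    have hexp : (xhat - yhat) ⬝ᵥ ς⁻¹ *ᵥ (xhat - yhat) =
        xhat ⬝ᵥ ς⁻¹ *ᵥ xhat - xhat ⬝ᵥ ς⁻¹ *ᵥ yhat - yhat ⬝ᵥ ς⁻¹ *ᵥ xhat
          + yhat ⬝ᵥ ς⁻¹ *ᵥ yhat := by
      rw [Matrix.mulVec_sub]
      simp [sub_dotProduct, dotProduct_sub]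
      ring
    linarith [h0, hexp ▸ h0]
  have hyB0 : 0 ≤ yhat ⬝ᵥ ς⁻¹ *ᵥ yhat := by
    have := hinv.posSemidef.dotProduct_mulVec_nonneg yhat
    simpa using this
  -- imaginary part computation
  have him : ((fun j => t * (xhat j : ℂ) - (ry : ℂ) * (yhat j : ℂ)) ⬝ᵥ
        ((ς⁻¹).map (fun a => (a : ℂ))).mulVec
          (fun j => t * (xhat j : ℂ) - (ry : ℂ) * (yhat j : ℂ))).im =
      t.im * (2 * t.re * (xhat ⬝ᵥ ς⁻¹ *ᵥ xhat)
        - ry * (xhat ⬝ᵥ ς⁻¹ *ᵥ yhat + yhat ⬝ᵥ ς⁻¹ *ᵥ xhat)) := by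
    simp only [dotProduct, Matrix.mulVec, Matrix.map_apply, Fin.sum_univ_three]
    simp only [Complex.add_im, Complex.sub_im, Complex.mul_im, Complex.mul_re,
      Complex.ofReal_re, Complex.ofReal_im, Complex.add_re, Complex.sub_re]
    ring
  rw [him]
  -- arithmetic conclusion
  obtain ⟨hry0, hryr₀⟩ := hry
  have hmm : ςmax * ςmax⁻¹ = 1 := mul_inv_cancel₀ (ne_of_gt hςmax_pos)
  have hmm' : ςmin * ςmin⁻¹ = 1 := mul_inv_cancel₀ (ne_of_gt hςmin_pos)
  have hr₁' : ςmax * r₀ < r₁ * ςmin := by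
    rw [gt_iff_lt, div_mul_eq_mul_div, div_lt_iff₀ hςmin_pos] at hr₁
    exact hr₁
  have hr₁r₀ : r₀ < r₁ := by nlinarith
  have hpos : 0 < ςmax⁻¹ * (r₁ - r₀) + ςmax⁻¹ * r₁ - ςmin⁻¹ * r₀ := by
    have h1 : 0 < ςmax⁻¹ := inv_pos.mpr hςmax_pos
    have h2 : 0 < ςmin⁻¹ := inv_pos.mpr hςmin_pos
    nlinarith [mul_pos hςmax_pos hςmin_pos]
  refine ⟨?_, mul_pos htim hpos⟩
  have hinner : ςmax⁻¹ * (r₁ - r₀) + ςmax⁻¹ * r₁ - ςmin⁻¹ * r₀ ≤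
      2 * t.re * (xhat ⬝ᵥ ς⁻¹ *ᵥ xhat)
        - ry * (xhat ⬝ᵥ ς⁻¹ *ᵥ yhat + yhat ⬝ᵥ ς⁻¹ *ᵥ xhat) := by
    have h1 : 0 < ςmax⁻¹ := inv_pos.mpr hςmax_pos
    have h2 : ry * (xhat ⬝ᵥ ς⁻¹ *ᵥ yhat + yhat ⬝ᵥ ς⁻¹ *ᵥ xhat) ≤
        ry * (xhat ⬝ᵥ ς⁻¹ *ᵥ xhat + yhat ⬝ᵥ ς⁻¹ *ᵥ yhat) :=
      mul_le_mul_of_nonneg_left hcross (le_of_lt hry0)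
    nlinarith [mul_le_mul_of_nonneg_left hyB2 (le_of_lt hry0),
      mul_le_mul_of_nonneg_right (show ry ≤ r₀ from hryr₀) hyB0]
  exact mul_le_mul_of_nonneg_left hinner (le_of_lt htim)
end

section
/- Let ς ∈ ℝ^{3×3} be symmetric positive definite with minimal and maximal eigenvalues ς_min and ς_max, let r₀ > 0 and r₁ > (ς_max/ς_min)·r₀. Let α̃ : [0,∞) → [0,∞) be continuous and non-decreasing with α̃(r) = 0 for r ≤ r₁ and α̃(r) > 0 for r > r₁, and let γ ∈ ℂ with Re(γ) ≥ 0 and Im(γ) > 0. For x ∈ ℝ³ let X := (1 + γ·α̃(|x|))·x ∈ ℂ³ (the radially complex-scaled point). Then for every x ∈ ℝ³ and every y ∈ ℝ³ with |y| = r₀, the complex number q := (X − y)ᵀ ς⁻¹ (X − y) satisfies either Im(q) > 0 or q is a nonnegative real number; moreover q = 0 if and only if x = y. -/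
open Matrix Complex

/-- Euclidean norm of a vector in `ℝ³`. -/
noncomputable def norm3 (x : Fin 3 → ℝ) : ℝ := Real.sqrt (∑ i, x i ^ 2)

/-- The radially complex-scaled point `X = (1 + γ α̃(|x|)) x ∈ ℂ³`. -/
noncomputable def scaledPoint (γ : ℂ) (α : ℝ → ℝ) (x : Fin 3 → ℝ) : Fin 3 → ℂ :=
  fun j => (1 + γ * (α (norm3 x) : ℂ)) * (x j : ℂ)

/-- The complex bilinear quadratic form `(X − y)ᵀ ς⁻¹ (X − y)`. -/
noncomputable def qform (ς : Matrix (Fin 3) (Fin 3) ℝ) (γ : ℂ) (α : ℝ → ℝ)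
    (x y : Fin 3 → ℝ) : ℂ :=
  (fun j => scaledPoint γ α x j - (y j : ℂ)) ⬝ᵥ
    ((ς⁻¹).map (fun a => (a : ℂ))).mulVec (fun j => scaledPoint γ α x j - (y j : ℂ))

/-- Auxiliary: for a real symmetric matrix, the bilinear form is symmetric. -/
lemma aux_symm_swap {n : Type*} [Fintype n] (M : Matrix n n ℝ) (hM : M.IsHermitian)
    (u w : n → ℝ) : u ⬝ᵥ M *ᵥ w = w ⬝ᵥ M *ᵥ u := by
  have hT : Mᵀ = M := by
    rw [← Matrix.conjTranspose_eq_transpose_of_trivial, hM.eq]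
  rw [dotProduct_mulVec, ← mulVec_transpose, hT, dotProduct_comm]

/-- Auxiliary: two-sided quadratic form bounds from eigenvalue bounds. -/
lemma aux_quad_bounds {n : Type*} [Fintype n] [DecidableEq n] (M : Matrix n n ℝ)
    (hM : M.IsHermitian) (c C : ℝ) (hc : ∀ i, c ≤ hM.eigenvalues i)
    (hC : ∀ i, hM.eigenvalues i ≤ C) (v : n → ℝ) :
    c * (v ⬝ᵥ v) ≤ v ⬝ᵥ M *ᵥ v ∧ v ⬝ᵥ M *ᵥ v ≤ C * (v ⬝ᵥ v) := by
  set U : Matrix n n ℝ := (hM.eigenvectorUnitary : Matrix n n ℝ) with hU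
  have hUmem := hM.eigenvectorUnitary.2
  have hUU : U * star U = 1 := (Matrix.mem_unitaryGroup_iff).mp hUmem
  have hstar : star U = Uᵀ := by
    rw [Matrix.star_eq_conjTranspose, Matrix.conjTranspose_eq_transpose_of_trivial]
  set w : n → ℝ := Uᵀ *ᵥ v with hw
  have hkey : v ᵥ* U = w := by rw [hw, mulVec_transpose]
  have hform : v ⬝ᵥ M *ᵥ v = ∑ i, hM.eigenvalues i * w i ^ 2 := by
    conv_lhs => rw [hM.spectral_theorem, Unitary.conjStarAlgAut_apply]
    rw [← mulVec_mulVec, ← mulVec_mulVec, dotProduct_mulVec, hkey, hstar, ← hw]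
    simp only [mulVec_diagonal, dotProduct, Function.comp]
    exact Finset.sum_congr rfl fun i _ => by simp [RCLike.ofReal_real_eq_id]; ring
  have hww : w ⬝ᵥ w = v ⬝ᵥ v := by
    nth_rewrite 1 [← hkey]
    rw [← dotProduct_mulVec, hw, ← hstar, mulVec_mulVec, hUU, one_mulVec]
  have hvv : v ⬝ᵥ v = ∑ i, w i ^ 2 := by
    rw [← hww]; simp [dotProduct, sq]
  constructor
  · rw [hform, hvv, Finset.mul_sum]
    exact Finset.sum_le_sum fun i _ => mul_le_mul_of_nonneg_right (hc i) (sq_nonneg _)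
  · rw [hform, hvv, Finset.mul_sum]
    exact Finset.sum_le_sum fun i _ => mul_le_mul_of_nonneg_right (hC i) (sq_nonneg _)

set_option maxHeartbeats 1000000 in
theorem dxy_sign_and_vanishing
    (ς : Matrix (Fin 3) (Fin 3) ℝ) (hς : ς.PosDef)
    (ςmin ςmax : ℝ)
    (hmin : IsLeast {μ : ℝ | ∃ v : Fin 3 → ℝ, v ≠ 0 ∧ ς.mulVec v = μ • v} ςmin)
    (hmax : IsGreatest {μ : ℝ | ∃ v : Fin 3 → ℝ, v ≠ 0 ∧ ς.mulVec v = μ • v} ςmax)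
    (r₀ r₁ : ℝ) (hr₀ : 0 < r₀) (hr₁ : r₁ > (ςmax / ςmin) * r₀)
    (α : ℝ → ℝ)
    (hα0 : ∀ r ∈ Set.Ici (0 : ℝ), 0 ≤ α r)
    (hαcont : ContinuousOn α (Set.Ici 0))
    (hαmono : MonotoneOn α (Set.Ici 0))
    (hαzero : ∀ r ∈ Set.Ici (0 : ℝ), r ≤ r₁ → α r = 0)
    (hαpos : ∀ r ∈ Set.Ici (0 : ℝ), r₁ < r → 0 < α r)
    (γ : ℂ) (hγre : 0 ≤ γ.re) (hγim : 0 < γ.im)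
    (x y : Fin 3 → ℝ) (hy : norm3 y = r₀) :
    (0 < (qform ς γ α x y).im ∨
      ((qform ς γ α x y).im = 0 ∧ 0 ≤ (qform ς γ α x y).re)) ∧
    (qform ς γ α x y = 0 ↔ x = y) := by
  classical
  have hMpd : (ς⁻¹).PosDef := hς.inv
  have hMh : (ς⁻¹).IsHermitian := hMpd.1
  set M : Matrix (Fin 3) (Fin 3) ℝ := ς⁻¹ with hMdef
  -- basic norm facts
  have hn3 : ∀ v : Fin 3 → ℝ, v ⬝ᵥ v = norm3 v ^ 2 := by
    intro v
    rw [norm3, Real.sq_sqrt (by positivity)]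
    simp [dotProduct, sq]
  have hdotnn : ∀ v : Fin 3 → ℝ, 0 ≤ v ⬝ᵥ v := fun v => by rw [hn3]; positivity
  -- positivity of ςmin
  obtain ⟨v₀, hv₀ne, hv₀⟩ := hmin.1
  have hvv0 : (0:ℝ) < v₀ ⬝ᵥ v₀ := by
    rcases lt_or_eq_of_le (hdotnn v₀) with h | h
    · exact h
    · exfalso; exact hv₀ne ((dotProduct_self_eq_zero).mp h.symm)
  have hςminpos : 0 < ςmin := by
    have h1 : 0 < star v₀ ⬝ᵥ ς *ᵥ v₀ := hς.dotProduct_mulVec_pos hv₀ne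
    rw [star_trivial, hv₀, dotProduct_smul, smul_eq_mul] at h1
    nlinarith [hvv0]
  have hminmax : ςmin ≤ ςmax := hmax.2 hmin.1
  have hςmaxpos : 0 < ςmax := lt_of_lt_of_le hςminpos hminmax
  -- eigenvalues of M = ς⁻¹ lie in [ςmax⁻¹, ςmin⁻¹]
  have hμpos : ∀ i, 0 < hMh.eigenvalues i := fun i => hMpd.eigenvalues_pos i
  have hmem : ∀ i, (hMh.eigenvalues i)⁻¹ ∈
      {μ : ℝ | ∃ v : Fin 3 → ℝ, v ≠ 0 ∧ ς.mulVec v = μ • v} := by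
    intro i
    set e : Fin 3 → ℝ := ⇑(hMh.eigenvectorBasis i) with he
    have hene : e ≠ 0 := by
      have h0 := hMh.eigenvectorBasis.orthonormal.ne_zero i
      intro h
      exact h0 (by ext j; exact congrFun h j)
    have heig : M *ᵥ e = hMh.eigenvalues i • e := hMh.mulVec_eigenvectorBasis i
    refine ⟨e, hene, ?_⟩
    have hςM : ς * M = 1 := Matrix.mul_nonsing_inv ς (hς.det_pos.ne'.isUnit)
    have h1 : ς *ᵥ (M *ᵥ e) = e := by rw [mulVec_mulVec, hςM, one_mulVec]
    rw [heig, mulVec_smul] at h1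
    have h2 := congrArg (fun z => (hMh.eigenvalues i)⁻¹ • z) h1
    simpa [smul_smul, inv_mul_cancel₀ (hμpos i).ne'] using h2
  have hlow : ∀ i, ςmax⁻¹ ≤ hMh.eigenvalues i := by
    intro i
    have h2 := hmax.2 (hmem i)
    rw [← inv_inv (hMh.eigenvalues i)]
    exact inv_anti₀ (inv_pos.mpr (hμpos i)) h2
  have hhigh : ∀ i, hMh.eigenvalues i ≤ ςmin⁻¹ := by
    intro i
    have h2 := hmin.2 (hmem i)
    rw [← inv_inv (hMh.eigenvalues i)]
    exact inv_anti₀ hςminpos h2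
  have HB := fun v => aux_quad_bounds M hMh ςmax⁻¹ ςmin⁻¹ hlow hhigh v
  have hform_nonneg : ∀ v : Fin 3 → ℝ, 0 ≤ v ⬝ᵥ M *ᵥ v := by
    intro v
    have h1 := (HB v).1
    have h2 : 0 ≤ ςmax⁻¹ * (v ⬝ᵥ v) := mul_nonneg (by positivity) (hdotnn v)
    linarith
  have hswap := aux_symm_swap M hMh
  -- abbreviations
  set a : ℝ := α (norm3 x) with hadef
  have hnx0 : (0:ℝ) ≤ norm3 x := Real.sqrt_nonneg _
  have ha0 : 0 ≤ a := hα0 _ (Set.mem_Ici.mpr hnx0)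
  set A : ℝ := (x - y) ⬝ᵥ M *ᵥ (x - y) with hA
  set B : ℝ := (x - y) ⬝ᵥ M *ᵥ x with hBdef
  set C : ℝ := x ⬝ᵥ M *ᵥ x with hCdef
  set D : ℝ := y ⬝ᵥ M *ᵥ y with hDdef
  set E : ℝ := y ⬝ᵥ M *ᵥ x with hEdef
  -- the key algebraic identity
  have hq : qform ς γ α x y = (A : ℂ) + γ * ((2*a*B : ℝ) : ℂ) + γ^2 * ((a^2*C : ℝ) : ℂ) := by
    rw [hA, hBdef, hCdef]
    rw [show (2:ℝ)*a*((x - y) ⬝ᵥ M *ᵥ x) = a*((x - y) ⬝ᵥ M *ᵥ x + x ⬝ᵥ M *ᵥ (x - y)) by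
      rw [hswap x (x - y)]; ring]
    simp only [qform, scaledPoint, ← hMdef, ← hadef, dotProduct, mulVec, map_apply,
      Fin.sum_univ_three, Pi.sub_apply]
    push_cast
    ring
  have him : (qform ς γ α x y).im = γ.im * (2*a*B) + (2*γ.re*γ.im) * (a^2*C) := by
    rw [hq, sq]
    simp only [Complex.add_im, Complex.mul_im, Complex.mul_re, Complex.ofReal_re,
      Complex.ofReal_im]
    ring
  rcases eq_or_lt_of_le ha0 with h0 | hapos
  · -- unscaled case: q = A is a nonnegative real
    have hq' : qform ς γ α x y = (A : ℂ) := by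
      rw [hq, ← h0]; push_cast; ring
    have hA0 : 0 ≤ A := hform_nonneg (x - y)
    refine ⟨Or.inr ⟨by rw [hq']; exact Complex.ofReal_im A, by rw [hq']; simpa using hA0⟩, ?_⟩
    rw [hq']
    constructor
    · intro h
      have hA00 : A = 0 := by exact_mod_cast h
      by_contra hxy
      have hne : x - y ≠ 0 := sub_ne_zero.mpr hxy
      have hpos := hMpd.dotProduct_mulVec_pos hne
      rw [star_trivial] at hpos
      rw [hA] at hA00
      exact absurd hA00 (ne_of_gt hpos)
    · intro h
      subst h
      rw [hA]
      simp
  · -- scaled case: Im q > 0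
    have hx1 : r₁ < norm3 x := by
      by_contra h
      push_neg at h
      have := hαzero _ (Set.mem_Ici.mpr hnx0) h
      rw [← hadef] at this
      linarith
    have hratio : 1 ≤ ςmax / ςmin := (one_le_div hςminpos).mpr hminmax
    have hr0r1 : r₀ < r₁ := lt_of_le_of_lt (le_mul_of_one_le_left hr₀.le hratio) hr₁
    have hNpos : 0 < norm3 x := by linarith
    have hCb : ςmax⁻¹ * norm3 x ^ 2 ≤ C := by
      have h1 := (HB x).1
      rwa [hn3 x] at h1
    have hDb : D ≤ ςmin⁻¹ * r₀ ^ 2 := by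
      have h1 := (HB y).2
      rwa [hn3 y, hy] at h1
    have hst : ςmax * r₀ < r₁ * ςmin := by
      rw [div_mul_eq_mul_div] at hr₁
      exact (div_lt_iff₀ hςminpos).mp hr₁
    have hDC : D < C := by
      have h1 : ςmin⁻¹ * r₀ ^ 2 < ςmax⁻¹ * norm3 x ^ 2 := by
        rw [inv_mul_eq_div, inv_mul_eq_div, div_lt_div_iff₀ hςminpos hςmaxpos]
        have hr1pos : (0:ℝ) < r₁ := lt_trans hr₀ hr0r1
        have k1 : ςmax * r₀ * r₁ < r₁ * ςmin * r₁ := mul_lt_mul_of_pos_right hst hr1pos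
        have k2 : ςmax * r₀ * r₀ < ςmax * r₀ * r₁ :=
          mul_lt_mul_of_pos_left hr0r1 (mul_pos hςmaxpos hr₀)
        have k3 : r₁ * r₁ ≤ norm3 x * norm3 x := by nlinarith
        nlinarith [k1, k2, k3, hςminpos]
      linarith
    have hC0 : 0 < C := lt_of_lt_of_le (by positivity) hCb
    have hD0 : 0 ≤ D := hform_nonneg y
    -- Cauchy–Schwarz via discriminant
    have hexp : ∀ t : ℝ, (x + t • y) ⬝ᵥ M *ᵥ (x + t • y) = D * (t*t) + (2*E) * t + C := by
      intro t
      have hsw := hswap y x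
      rw [hCdef, hDdef, hEdef]
      simp only [mulVec_add, mulVec_smul, dotProduct_add, add_dotProduct, smul_dotProduct,
        dotProduct_smul, smul_eq_mul]
      rw [hsw]
      ring
    have hpos : ∀ t : ℝ, 0 ≤ D * (t*t) + (2*E) * t + C := by
      intro t
      rw [← hexp t]
      exact hform_nonneg _
    have hdisc := discrim_le_zero hpos
    rw [discrim] at hdisc
    have hBpos : 0 < B := by
      have hBeq : B = C - E := by
        rw [hBdef, hCdef, hEdef, sub_dotProduct]
      rw [hBeq]
      nlinarith [hdisc, mul_lt_mul_of_pos_right hDC hC0, sq_nonneg (C + E), hD0]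
    have himpos : 0 < (qform ς γ α x y).im := by
      rw [him]
      have h1 : 0 < γ.im * (2*a*B) := mul_pos hγim (by positivity)
      have h2 : 0 ≤ 2*γ.re*γ.im * (a^2*C) :=
        mul_nonneg (mul_nonneg (mul_nonneg (by norm_num) hγre) hγim.le) (by positivity)
      linarith
    have hqne : qform ς γ α x y ≠ 0 := by
      intro h
      rw [h] at himpos
      simp at himpos
    have hxy : x ≠ y := by
      intro h
      rw [h] at hx1
      rw [hy] at hx1
      linarith
    exact ⟨Or.inl himpos, ⟨fun h => absurd h hqne, fun h => absurd h hxy⟩⟩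
end

section
/- Let c > 0 and ω ∈ ℝ. Then the complex number z := 1 + 1/(c − iω) has positive real part, and its argument satisfies |arg z| ≤ arctan( 1/(2·√(c² + c)) ); consequently cos(arg z) ≥ 1/√(1 + 1/(4·(c² + c))). -/
open Complex

theorem frequency_dependent_scaling_angle_bound (c ω : ℝ) (hc : 0 < c) :
    0 < (1 + 1 / ((c : ℂ) - Complex.I * (ω : ℂ))).re ∧
    |Complex.arg (1 + 1 / ((c : ℂ) - Complex.I * (ω : ℂ)))| ≤
      Real.arctan (1 / (2 * Real.sqrt (c ^ 2 + c))) ∧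
    1 / Real.sqrt (1 + 1 / (4 * (c ^ 2 + c))) ≤
      Real.cos (Complex.arg (1 + 1 / ((c : ℂ) - Complex.I * (ω : ℂ)))) := by
  set z : ℂ := 1 + 1 / ((c : ℂ) - Complex.I * (ω : ℂ)) with hz
  have hD : (0:ℝ) < c ^ 2 + ω ^ 2 := by positivity
  have hre : z.re = 1 + c / (c ^ 2 + ω ^ 2) := by
    simp [hz, Complex.div_re, Complex.normSq_apply]
    ring_nf
  have him : z.im = ω / (c ^ 2 + ω ^ 2) := by
    simp [hz, Complex.div_im, Complex.normSq_apply]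
    ring_nf
  have hrepos : 0 < z.re := by rw [hre]; positivity
  have hzarg : |Complex.arg z| < Real.pi / 2 :=
    Complex.abs_arg_lt_pi_div_two_iff.2 (Or.inl hrepos)
  have harg : Complex.arg z = Real.arctan (z.im / z.re) := by
    rw [← Complex.tan_arg z, Real.arctan_tan (neg_lt_of_abs_lt hzarg) (lt_of_abs_lt hzarg)]
  have hS : (0:ℝ) < Real.sqrt (c ^ 2 + c) := Real.sqrt_pos.2 (by positivity)
  have hmono := Real.arctan_strictMono.monotone
  -- key inequality: |im/re| ≤ 1/(2√(c²+c))
  have hkey : |z.im / z.re| ≤ 1 / (2 * Real.sqrt (c ^ 2 + c)) := by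
    rw [hre, him]
    have h1 : ω / (c ^ 2 + ω ^ 2) / (1 + c / (c ^ 2 + ω ^ 2)) = ω / (c ^ 2 + ω ^ 2 + c) := by
      rw [eq_div_iff (by positivity : (c ^ 2 + ω ^ 2 + c : ℝ) ≠ 0),
        div_mul_eq_mul_div, div_eq_iff (by positivity : (1 + c / (c ^ 2 + ω ^ 2) : ℝ) ≠ 0)]
      field_simp
    rw [h1, abs_div, abs_of_pos (by positivity : (0:ℝ) < c ^ 2 + ω ^ 2 + c)]
    rw [div_le_div_iff₀ (by positivity) (by positivity)]
    have hs2 : Real.sqrt (c ^ 2 + c) ^ 2 = c ^ 2 + c := Real.sq_sqrt (by positivity)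
    nlinarith [sq_nonneg (|ω| - Real.sqrt (c ^ 2 + c)), _root_.sq_abs ω]
  have habs : |Complex.arg z| ≤ Real.arctan (1 / (2 * Real.sqrt (c ^ 2 + c))) := by
    rw [harg]
    rcases abs_cases (Real.arctan (z.im / z.re)) with ⟨h, _⟩ | ⟨h, _⟩
    · rw [h]
      exact hmono (le_trans (le_abs_self _) hkey)
    · rw [h, ← Real.arctan_neg]
      exact hmono (le_trans (neg_le_abs _) hkey)
  refine ⟨hrepos, habs, ?_⟩
  have hT : Real.arctan (1 / (2 * Real.sqrt (c ^ 2 + c))) ≤ Real.pi / 2 :=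
    (Real.arctan_lt_pi_div_two _).le
  have hcos : Real.cos (Real.arctan (1 / (2 * Real.sqrt (c ^ 2 + c)))) ≤
      Real.cos (Complex.arg z) := by
    rw [← Real.cos_abs (Complex.arg z)]
    exact Real.cos_le_cos_of_nonneg_of_le_pi (abs_nonneg _)
      (hT.trans (by linarith [Real.pi_pos])) habs
  refine le_trans (le_of_eq ?_) hcos
  rw [Real.cos_arctan]
  congr 2
  rw [div_pow, one_pow, mul_pow, Real.sq_sqrt (by positivity : (0:ℝ) ≤ c ^ 2 + c)]
  norm_num
end
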